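/- In the d-type Ehrenfest urn: if p_{jl} = p_l(1 + ∑_{i=1}^{d-1} ρ_i u_j^{(i)} u_l^{(i)}) and the generator L acts by Lf(x) = ∑_{j,l} (x_j/N) p_{jl} (f(x - e_j + e_l) - f(x)), then the multivariate Krawtchouk polynomial Q_n(·;u) is an eigenfunction: L Q_n(x;u) = -(∑_{i=1}^{d-1} n_i(1-ρ_i)/N) Q_n(x;u) for all x with |x| = N. -/

import Mathlib

open MvPolynomial

/-- Multivariate Krawtchouk polynomial `Q_n(x;u)`. -/
noncomputable def QK (d : ℕ) [NeZero d] (u : Fin d → Fin d → ℝ) (n x : Fin d → ℕ) : ℝ :=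
  MvPolynomial.coeff (Finsupp.equivFunOnFinite.symm n)
    (∏ j, (1 + ∑ l ∈ Finset.univ.erase 0, MvPolynomial.X l * MvPolynomial.C (u l j)) ^ x j)

/-!
With `F_j = 1 + ∑_{i ≠ 0} w_i u_j^{(i)}`, the generating function of `Q_·(x;u)` is
`G_x = ∏_j F_j ^ x_j`. Moving a ball from urn `j` to urn `l` replaces one factor `F_j` by `F_l`,
and orthonormality gives `∑_l p_{jl} F_l = F_j + ∑_{i ≠ 0} (ρ_i - 1) w_i u_j^{(i)}`. Summed against
`x_j`, the generator therefore acts on `G_x` as `N⁻¹ ∑_{i ≠ 0} (ρ_i - 1) w_i ∂/∂w_i`, which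
multiplies the coefficient of `w^n` by `N⁻¹ ∑_{i ≠ 0} (ρ_i - 1) n_i`.
-/

open Finset

theorem Derivation.leibniz_prod_pow {R A ι : Type*} [CommSemiring R] [CommSemiring A]
    [Algebra R A] [DecidableEq ι] (D : Derivation R A A) (s : Finset ι) (f : ι → A)
    (x : ι → ℕ) :
    D (∏ m ∈ s, f m ^ x m) =
      ∑ j ∈ s, x j • ((∏ m ∈ s, f m ^ (x - Pi.single j 1 : ι → ℕ) m) * D (f j)) := by
  induction s using Finset.induction_on with
  | empty => simp
  | @insert a s ha ih =>
    have hself : ∏ m ∈ insert a s, f m ^ (x - Pi.single a 1 : ι → ℕ) m =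
        f a ^ (x a - 1) * ∏ m ∈ s, f m ^ x m := by
      rw [prod_insert ha]
      refine congrArg₂ _ (by simp) (prod_congr rfl fun m hm => ?_)
      rw [Pi.sub_apply, Pi.single_eq_of_ne (ne_of_mem_of_not_mem hm ha), Nat.sub_zero]
    have hrest : ∀ j ∈ s,
        x j • ((∏ m ∈ insert a s, f m ^ (x - Pi.single j 1 : ι → ℕ) m) * D (f j)) =
          f a ^ x a * (x j • ((∏ m ∈ s, f m ^ (x - Pi.single j 1 : ι → ℕ) m) * D (f j))) := by
      intro j hj
      rw [prod_insert ha, Pi.sub_apply, Pi.single_eq_of_ne (ne_of_mem_of_not_mem hj ha).symm,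
        Nat.sub_zero, mul_assoc, mul_smul_comm]
    rw [prod_insert ha, D.leibniz, ih, D.leibniz_pow, sum_insert ha, hself, sum_congr rfl hrest,
      ← mul_sum, add_comm]
    simp only [smul_eq_mul, nsmul_eq_mul]
    ring

theorem MvPolynomial.coeff_X_mul_pderiv {R σ : Type*} [CommSemiring R] [DecidableEq σ] (i : σ)
    (m : σ →₀ ℕ) (f : MvPolynomial σ R) :
    coeff m (X i * pderiv i f) = m i * coeff m f := by
  induction f using MvPolynomial.induction_on' with
  | monomial v c =>
    rw [X_mul_pderiv_monomial, coeff_smul, coeff_monomial]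
    split_ifs with h
    · subst h; simp [nsmul_eq_mul]
    · simp
  | add f g hf hg => rw [map_add, mul_add, coeff_add, coeff_add, hf, hg, mul_add]

theorem MvPolynomial.pderiv_one_add_sum_X_mul_C {R σ : Type*} [CommSemiring R] [DecidableEq σ]
    (s : Finset σ) (c : σ → R) {i : σ} (hi : i ∈ s) :
    pderiv i (1 + ∑ l ∈ s, X l * C (c l)) = C (c i) := by
  simp [pderiv_X, Pi.single_apply, hi]

theorem Finset.prod_pow_add_single {M ι : Type*} [CommMonoid M] [Fintype ι] [DecidableEq ι]
    (f : ι → M) (x : ι → ℕ) (l : ι) :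
    ∏ m, f m ^ (x + Pi.single l 1 : ι → ℕ) m = f l * ∏ m, f m ^ x m := by
  simp only [Pi.add_apply, pow_add, prod_mul_distrib, mul_comm (∏ m, f m ^ x m)]
  simp [Pi.single_apply, pow_ite]

section Ehrenfest

variable {R : Type*} [CommRing R] {d : ℕ} [NeZero d]

noncomputable def krawtchoukFactor (u : Fin d → Fin d → R) (j : Fin d) :
    MvPolynomial (Fin d) R :=
  1 + ∑ l ∈ univ.erase 0, X l * C (u l j)

noncomputable def krawtchoukGenFun (u : Fin d → Fin d → R) (x : Fin d → ℕ) :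
    MvPolynomial (Fin d) R :=
  ∏ j, krawtchoukFactor u j ^ x j

def ehrenfestKernel (p ρ : Fin d → R) (u : Fin d → Fin d → R) (j l : Fin d) : R :=
  p l * (1 + ∑ i ∈ univ.erase 0, ρ i * u i j * u i l)

variable {p ρ : Fin d → R} {u : Fin d → Fin d → R}

theorem sum_ehrenfestKernel_mul (hu0 : ∀ j, u 0 j = 1)
    (horth : ∀ l m, ∑ i, u l i * u m i * p i = if l = m then (1 : R) else 0) (j k : Fin d) :
    ∑ l, ehrenfestKernel p ρ u j l * u k l = if k = 0 then 1 else ρ k * u k j := by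
  have hexpand : ∀ l, ehrenfestKernel p ρ u j l * u k l =
      u 0 l * u k l * p l + ∑ i ∈ univ.erase 0, ρ i * u i j * (u i l * u k l * p l) := by
    intro l
    simp only [ehrenfestKernel, hu0, mul_add, add_mul, mul_one, one_mul, mul_sum, sum_mul]
    congr 1
    · ring
    · exact sum_congr rfl fun i _ => by ring
  simp only [hexpand, sum_add_distrib, horth]
  rw [sum_comm]
  simp only [← mul_sum, horth, mul_ite, mul_one, mul_zero, sum_ite_eq', mem_erase, mem_univ,
    and_true]
  by_cases hk : k = 0 <;> simp [hk, eq_comm]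

theorem sum_ehrenfestKernel (hu0 : ∀ j, u 0 j = 1)
    (horth : ∀ l m, ∑ i, u l i * u m i * p i = if l = m then (1 : R) else 0) (j : Fin d) :
    ∑ l, ehrenfestKernel p ρ u j l = 1 := by
  simpa [hu0] using sum_ehrenfestKernel_mul (ρ := ρ) hu0 horth j 0

theorem sum_C_ehrenfestKernel_mul_sub_krawtchoukFactor (hu0 : ∀ j, u 0 j = 1)
    (horth : ∀ l m, ∑ i, u l i * u m i * p i = if l = m then (1 : R) else 0) (j : Fin d) :
    ∑ l, C (ehrenfestKernel p ρ u j l) * (krawtchoukFactor u l - krawtchoukFactor u j) =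
      ∑ i ∈ univ.erase 0, C ((ρ i - 1) * u i j) * X i := by
  have hdiff : ∀ l, krawtchoukFactor u l - krawtchoukFactor u j =
      ∑ i ∈ univ.erase 0, C (u i l - u i j) * X i := by
    intro l
    simp only [krawtchoukFactor, add_sub_add_left_eq_sub, ← sum_sub_distrib, map_sub]
    exact sum_congr rfl fun i _ => by ring
  have hcoeff : ∀ i ∈ univ.erase (0 : Fin d),
      ∑ l, ehrenfestKernel p ρ u j l * (u i l - u i j) = (ρ i - 1) * u i j := by
    intro i hi
    simp only [mul_sub, sum_sub_distrib, ← sum_mul, sum_ehrenfestKernel_mul hu0 horth,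
      sum_ehrenfestKernel hu0 horth, if_neg (ne_of_mem_erase hi)]
    ring
  simp only [hdiff, mul_sum, ← mul_assoc, ← map_mul]
  rw [sum_comm]
  refine sum_congr rfl fun i hi => ?_
  rw [← sum_mul, ← map_sum, hcoeff i hi]

theorem krawtchoukGenFun_add_single (u : Fin d → Fin d → R) (x : Fin d → ℕ) (l : Fin d) :
    krawtchoukGenFun u (x + Pi.single l 1) = krawtchoukFactor u l * krawtchoukGenFun u x :=
  prod_pow_add_single _ x l

theorem pderiv_krawtchoukGenFun (u : Fin d → Fin d → R) (x : Fin d → ℕ) {i : Fin d}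
    (hi : i ≠ 0) :
    pderiv i (krawtchoukGenFun u x) =
      ∑ j, C ((x j : R) * u i j) * krawtchoukGenFun u (x - Pi.single j 1) := by
  have hi' : i ∈ univ.erase 0 := mem_erase.mpr ⟨hi, mem_univ i⟩
  rw [krawtchoukGenFun, (pderiv i).leibniz_prod_pow]
  refine sum_congr rfl fun j _ => ?_
  rw [krawtchoukFactor, pderiv_one_add_sum_X_mul_C _ _ hi', krawtchoukGenFun, map_mul,
    map_natCast, nsmul_eq_mul]
  ring

theorem ehrenfest_generator_krawtchoukGenFun (hu0 : ∀ j, u 0 j = 1)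
    (horth : ∀ l m, ∑ i, u l i * u m i * p i = if l = m then (1 : R) else 0) (x : Fin d → ℕ) :
    ∑ j, ∑ l, C ((x j : R) * ehrenfestKernel p ρ u j l) *
        (krawtchoukGenFun u (x - Pi.single j 1 + Pi.single l 1) - krawtchoukGenFun u x) =
      ∑ i ∈ univ.erase 0, C (ρ i - 1) * (X i * pderiv i (krawtchoukGenFun u x)) := by
  have hrow : ∀ j, ∑ l, C ((x j : R) * ehrenfestKernel p ρ u j l) *
        (krawtchoukGenFun u (x - Pi.single j 1 + Pi.single l 1) - krawtchoukGenFun u x) =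
      ∑ i ∈ univ.erase 0, C (ρ i - 1) *
        (X i * (C ((x j : R) * u i j) * krawtchoukGenFun u (x - Pi.single j 1))) := by
    intro j
    by_cases hxj : x j = 0
    · simp [hxj]
    have hx : x - Pi.single j 1 + Pi.single j 1 = x := by
      ext m
      by_cases hm : m = j
      · subst hm
        simp only [Pi.add_apply, Pi.sub_apply, Pi.single_eq_same]
        omega
      · simp [hm]
    set G := krawtchoukGenFun u (x - Pi.single j 1)
    have hG : krawtchoukGenFun u x = krawtchoukFactor u j * G := by
      rw [← krawtchoukGenFun_add_single, hx]
    calc _ = C (x j : R) * (∑ l, C (ehrenfestKernel p ρ u j l) *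
            (krawtchoukFactor u l - krawtchoukFactor u j)) * G := by
          simp only [krawtchoukGenFun_add_single, hG, mul_sum, sum_mul, map_mul]
          exact sum_congr rfl fun l _ => by ring
      _ = _ := by
          rw [sum_C_ehrenfestKernel_mul_sub_krawtchoukFactor hu0 horth, mul_sum, sum_mul]
          refine sum_congr rfl fun i _ => ?_
          simp only [map_mul]
          ring
  rw [sum_congr rfl fun j _ => hrow j, sum_comm]
  refine sum_congr rfl fun i hi => ?_
  rw [pderiv_krawtchoukGenFun u x (ne_of_mem_erase hi), mul_sum, mul_sum]

end Ehrenfest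

theorem QK_eq_coeff_krawtchoukGenFun (d : ℕ) [NeZero d] (u : Fin d → Fin d → ℝ)
    (n x : Fin d → ℕ) :
    QK d u n x = coeff (Finsupp.equivFunOnFinite.symm n) (krawtchoukGenFun u x) :=
  rfl

theorem ehrenfest_urn_eigenfunction_general
    (d N : ℕ) [NeZero d] (p : Fin d → ℝ)
    (u : Fin d → Fin d → ℝ) (hu0 : ∀ j, u 0 j = 1)
    (horth : ∀ l m, ∑ i, u l i * u m i * p i = if l = m then (1 : ℝ) else 0)
    (ρ : Fin d → ℝ) (x : Fin d → ℕ) (n : Fin d → ℕ) :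
    ∑ j, ∑ l,
        ((x j : ℝ) / N) *
          (p l * (1 + ∑ i ∈ Finset.univ.erase 0, ρ i * u i j * u i l)) *
          (QK d u n
              (fun m => x m - (if m = j then 1 else 0) + if m = l then 1 else 0) -
            QK d u n x) =
      -(∑ i ∈ Finset.univ.erase 0, (n i : ℝ) * (1 - ρ i) / N) * QK d u n x := by
  have hmove : ∀ j l, (fun m => x m - (if m = j then 1 else 0) + if m = l then 1 else 0) =
      x - Pi.single j 1 + Pi.single l 1 := by
    intro j l
    ext m
    simp [Pi.single_apply]
  have hcoeff := congrArg (coeff (Finsupp.equivFunOnFinite.symm n))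
    (ehrenfest_generator_krawtchoukGenFun (p := p) (ρ := ρ) hu0 horth x)
  simp only [coeff_sum, coeff_C_mul, coeff_sub, coeff_X_mul_pderiv,
    Finsupp.coe_equivFunOnFinite_symm, ← QK_eq_coeff_krawtchoukGenFun] at hcoeff
  calc _ = (N : ℝ)⁻¹ * ∑ j, ∑ l, (x j : ℝ) * ehrenfestKernel p ρ u j l *
          (QK d u n (x - Pi.single j 1 + Pi.single l 1) - QK d u n x) := by
        simp only [hmove, mul_sum, ehrenfestKernel]
        exact sum_congr rfl fun j _ => sum_congr rfl fun l _ => by ring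
    _ = (N : ℝ)⁻¹ * ∑ i ∈ univ.erase 0, (ρ i - 1) * ((n i : ℝ) * QK d u n x) := by
        rw [hcoeff]
    _ = _ := by
        rw [neg_mul, sum_mul, ← sum_neg_distrib, mul_sum]
        exact sum_congr rfl fun i _ => by ring

/-- In the `d`-type Ehrenfest urn with `p_{jl} = p_l(1 + ∑_i ρ_i u_j^{(i)} u_l^{(i)})`,
the multivariate Krawtchouk polynomial `Q_n(·;u)` is an eigenfunction of the
generator with eigenvalue `-∑_i n_i(1-ρ_i)/N`. -/
theorem ehrenfest_urn_eigenfunction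
    (d N : ℕ) [NeZero d] (hd : 2 ≤ d) (hN : 0 < N)
    (p : Fin d → ℝ) (hp : ∀ j, 0 < p j) (hpsum : ∑ j, p j = 1)
    (u : Fin d → Fin d → ℝ) (hu0 : ∀ j, u 0 j = 1)
    (horth : ∀ l m, ∑ i, u l i * u m i * p i = if l = m then (1 : ℝ) else 0)
    (ρ : Fin d → ℝ)
    (hPnonneg : ∀ j l, 0 ≤ p l * (1 + ∑ i ∈ Finset.univ.erase 0, ρ i * u i j * u i l))
    (x : Fin d → ℕ) (hx : ∑ j, x j = N)
    (n : Fin d → ℕ) (hn0 : n 0 = 0) (hn : ∑ i, n i ≤ N) :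
    ∑ j, ∑ l,
        ((x j : ℝ) / N) *
          (p l * (1 + ∑ i ∈ Finset.univ.erase 0, ρ i * u i j * u i l)) *
          (QK d u n
              (fun m => x m - (if m = j then 1 else 0) + if m = l then 1 else 0) -
            QK d u n x) =
      -(∑ i ∈ Finset.univ.erase 0, (n i : ℝ) * (1 - ρ i) / N) * QK d u n x :=
  ehrenfest_urn_eigenfunction_general d N p u hu0 horth ρ x n
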